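/- M^[2](1, n) = ⌈n/2⌉ for every n ≥ 3. -/

import Mathlib

/-- An adaptive group-testing strategy on a population of `n` items:
a binary decision tree whose internal nodes test a subset (branching on
contaminated / pure) and whose leaves output a guess for the defective set. -/
inductive GTTree (n : ℕ) : Type where
  | leaf (guess : Finset (Fin n)) : GTTree n
  | node (test : Finset (Fin n)) (pos neg : GTTree n) : GTTree n

/-- Run the strategy when the true defective set is `D`. -/
def GTTree.run {n : ℕ} (D : Finset (Fin n)) : GTTree n → Finset (Fin n)
  | .leaf g => g
  | .node t p q => if (t ∩ D).Nonempty then p.run D else q.run D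

/-- Worst-case number of tests performed by the strategy. -/
def GTTree.depth {n : ℕ} : GTTree n → ℕ
  | .leaf _ => 0
  | .node _ p q => max p.depth q.depth + 1

/-- The strategy correctly identifies every possible defective set of size `d`. -/
def GTTree.Solves {n : ℕ} (T : GTTree n) (d : ℕ) : Prop :=
  ∀ D : Finset (Fin n), D.card = d → T.run D = D

/-- Every test set occurring in the tree has size exactly `k`. -/
def GTTree.SizeK {n : ℕ} (k : ℕ) : GTTree n → Prop
  | .leaf _ => True
  | .node t p q => t.card = k ∧ p.SizeK k ∧ q.SizeK k

/-- `M d n`: optimal worst-case number of adaptive tests to find the `d`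
defectives among `n` items, test sets of arbitrary size (`⊤` if unsolvable). -/
noncomputable def M (d n : ℕ) : ℕ∞ :=
  sInf {c : ℕ∞ | ∃ T : GTTree n, T.Solves d ∧ (T.depth : ℕ∞) = c}

/-- `Mfix k d n`: optimal worst-case number of adaptive tests to find the `d`
defectives among `n` items, every test set of size exactly `k` (`⊤` if unsolvable). -/
noncomputable def Mfix (k d n : ℕ) : ℕ∞ :=
  sInf {c : ℕ∞ | ∃ T : GTTree n, T.SizeK k ∧ T.Solves d ∧ (T.depth : ℕ∞) = c}

/-!
Lower bound: a size-`k` test splits the candidates into at most `k` that answer positive and the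
rest, so a strategy of depth `d ≥ 1` can tell apart at most `k * d` single defectives.
Upper bound: test disjoint pairs one after another; once a pair `{a, b}` answers positive, one
more test `{a, c}` with any third item `c` decides between `a` and `b`, and the last pair (when
`n` is even) needs only that second test.
-/

theorem Nat.ceil_div_two_eq {K : Type*} [Semifield K] [LinearOrder K] [IsStrictOrderedRing K]
    [FloorSemiring K] (n : ℕ) : ⌈(n : K) / 2⌉₊ = (n + 1) / 2 := by
  apply le_antisymm
  · rw [Nat.ceil_le, div_le_iff₀ two_pos]
    exact_mod_cast (by omega : n ≤ (n + 1) / 2 * 2)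
  · have h : (n : K) ≤ 2 * ⌈(n : K) / 2⌉₊ := by
      rw [← div_le_iff₀' two_pos]
      exact Nat.le_ceil _
    have : n ≤ 2 * ⌈(n : K) / 2⌉₊ := by exact_mod_cast h
    omega

namespace GTTree

variable {n : ℕ}

def Identifies (T : GTTree n) (S : Finset (Fin n)) : Prop :=
  ∀ j ∈ S, T.run {j} = {j}

theorem Identifies.mono {T : GTTree n} {S S' : Finset (Fin n)} (h : T.Identifies S)
    (hS' : S' ⊆ S) : T.Identifies S' :=
  fun j hj => h j (hS' hj)

theorem solves_one_iff_identifies_univ {T : GTTree n} :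
    T.Solves 1 ↔ T.Identifies Finset.univ := by
  refine ⟨fun h j _ => h {j} (Finset.card_singleton j), fun h D hD => ?_⟩
  obtain ⟨j, rfl⟩ := Finset.card_eq_one.mp hD
  exact h j (Finset.mem_univ j)

theorem run_node_singleton (t : Finset (Fin n)) (p q : GTTree n) (j : Fin n) :
    (node t p q).run {j} = if j ∈ t then p.run {j} else q.run {j} := by
  by_cases hj : j ∈ t <;> simp [run, hj]

theorem identifies_node_iff {t S : Finset (Fin n)} {p q : GTTree n} :
    (node t p q).Identifies S ↔ p.Identifies (S ∩ t) ∧ q.Identifies (S \ t) := by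
  simp only [Identifies, run_node_singleton, Finset.mem_inter, Finset.mem_sdiff, and_imp]
  constructor
  · intro h
    exact ⟨fun j hjS hjt => by simpa [hjt] using h j hjS,
      fun j hjS hjt => by simpa [hjt] using h j hjS⟩
  · rintro ⟨hp, hq⟩ j hjS
    split_ifs with hjt
    exacts [hp j hjS hjt, hq j hjS hjt]

theorem identifies_leaf {S : Finset (Fin n)} (hS : S.card ≤ 1) : (leaf S).Identifies S :=
  fun j hj =>
    Finset.eq_singleton_iff_unique_mem.mpr ⟨hj, fun i hi => Finset.card_le_one.mp hS i hi j hj⟩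

theorem card_le_one_of_identifies_leaf {g S : Finset (Fin n)} (h : (leaf g).Identifies S) :
    S.card ≤ 1 :=
  Finset.card_le_one.mpr fun a ha b hb => Finset.singleton_inj.mp ((h a ha).symm.trans (h b hb))

theorem card_le_of_identifies {k : ℕ} (hk : 2 ≤ k) {T : GTTree n} (hT : T.SizeK k)
    {S : Finset (Fin n)} (h : T.Identifies S) : S.card ≤ max 1 (k * T.depth) := by
  induction T generalizing S with
  | leaf g => exact (card_le_one_of_identifies_leaf h).trans (le_max_left _ _)
  | node t p q ihp ihq =>
    obtain ⟨ht, hp, hq⟩ := hT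
    obtain ⟨hpS, hqS⟩ := identifies_node_iff.mp h
    have hpos : (S ∩ t).card ≤ min k (max 1 (k * p.depth)) :=
      le_min (ht ▸ Finset.card_le_card Finset.inter_subset_right) (ihp hp hpS)
    have hneg := ihq hq hqS
    have hsplit := Finset.card_inter_add_card_sdiff S t
    have hp_le : k * p.depth ≤ k * max p.depth q.depth := Nat.mul_le_mul_left _ (le_max_left _ _)
    have hq_le : k * q.depth ≤ k * max p.depth q.depth := Nat.mul_le_mul_left _ (le_max_right _ _)
    have hp_pos : 1 ≤ p.depth → k ≤ k * p.depth := Nat.le_mul_of_pos_right k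
    have hq_pos : 1 ≤ q.depth → k ≤ k * q.depth := Nat.le_mul_of_pos_right k
    have hp_zero : p.depth = 0 → k * p.depth = 0 := fun h => by rw [h, Nat.mul_zero]
    have hq_zero : q.depth = 0 → k * q.depth = 0 := fun h => by rw [h, Nat.mul_zero]
    simp only [depth, Nat.mul_succ]
    omega

theorem exists_sizeK_two_identifies (hn : 3 ≤ n) (S : Finset (Fin n)) :
    ∃ T : GTTree n, T.SizeK 2 ∧ T.Identifies S ∧ T.depth ≤ (S.card + 1) / 2 := by
  induction S using Finset.strongInduction with
  | H S ih =>
  rcases le_or_gt S.card 1 with hS1 | hS1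
  · exact ⟨leaf S, trivial, identifies_leaf hS1, Nat.zero_le _⟩
  obtain ⟨a, ha, b, hb, hab⟩ := Finset.one_lt_card.mp hS1
  have hpair : ({a, b} : Finset (Fin n)).card = 2 := Finset.card_pair hab
  have hpairS : {a, b} ⊆ S := Finset.insert_subset ha (Finset.singleton_subset_iff.mpr hb)
  rcases (show S.card = 2 ∨ 3 ≤ S.card by omega) with hS2 | hS3
  · obtain ⟨c, -, hc⟩ := Finset.exists_mem_notMem_of_card_lt_card
      (s := {a, b}) (t := Finset.univ) (by rw [hpair, Finset.card_univ, Fintype.card_fin]; omega)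
    obtain rfl : S = {a, b} := (Finset.eq_of_subset_of_card_le hpairS (by omega)).symm
    simp only [Finset.mem_insert, Finset.mem_singleton, not_or] at hc
    refine ⟨node {a, c} (leaf {a}) (leaf {b}),
      ⟨Finset.card_pair (Ne.symm hc.1), trivial, trivial⟩,
      identifies_node_iff.mpr ⟨(identifies_leaf (by simp)).mono ?_,
        (identifies_leaf (by simp)).mono ?_⟩, by simp [depth, hpair]⟩
    · intro x
      simp only [Finset.mem_inter, Finset.mem_insert, Finset.mem_singleton]
      grind
    · intro x
      simp only [Finset.mem_sdiff, Finset.mem_insert, Finset.mem_singleton]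
      grind
  · obtain ⟨T₁, hT₁, hT₁S, hT₁d⟩ := ih {a, b} (Finset.ssubset_iff_subset_ne.mpr
      ⟨hpairS, fun h => by rw [← h] at hS3; omega⟩)
    obtain ⟨T₂, hT₂, hT₂S, hT₂d⟩ :=
      ih (S \ {a, b}) (Finset.sdiff_ssubset hpairS ⟨a, by simp⟩)
    rw [Finset.card_sdiff_of_subset hpairS, hpair] at hT₂d
    rw [hpair] at hT₁d
    refine ⟨node {a, b} T₁ T₂, ⟨hpair, hT₁, hT₂⟩,
      identifies_node_iff.mpr ⟨hT₁S.mono Finset.inter_subset_right, hT₂S⟩, ?_⟩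
    simp only [depth]
    omega

end GTTree

theorem stmt13 (n : ℕ) (hn : 3 ≤ n) : Mfix 2 1 n = ((⌈(n : ℚ) / 2⌉₊ : ℕ) : ℕ∞) := by
  rw [Nat.ceil_div_two_eq]
  unfold Mfix
  apply le_antisymm
  · obtain ⟨T, hT, hTS, hTd⟩ := GTTree.exists_sizeK_two_identifies hn Finset.univ
    exact le_trans (sInf_le ⟨T, hT, GTTree.solves_one_iff_identifies_univ.mpr hTS, rfl⟩)
      (by simpa using hTd)
  · refine le_sInf ?_
    rintro _ ⟨T, hT, hTS, rfl⟩
    have h := GTTree.card_le_of_identifies le_rfl hT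
      (GTTree.solves_one_iff_identifies_univ.mp hTS)
    rw [Finset.card_univ, Fintype.card_fin] at h
    have : (n + 1) / 2 ≤ T.depth := by omega
    exact_mod_cast this
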